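/- arXiv:1712.06162 — 3 statements merged into one kernel-verified Lean document; each statement's English description precedes it below -/
import Mathlib

section
/- Let $R$ be a commutative ring and $I_1, I_2$ comaximal ideals of $R$ (i.e. $I_1 + I_2 = R$) such that $I_1 \neq I_1^2$ and $I_2 \neq I_2^2$. Then there exist $x \in I_1 \setminus I_1^2$ and $y \in I_2 \setminus I_2^2$ such that $x + y = 1$. -/
theorem stmt0 {R : Type*} [CommRing R] (I₁ I₂ : Ideal R)
    (hco : I₁ + I₂ = ⊤) (h1 : I₁ ≠ I₁ ^ 2) (h2 : I₂ ≠ I₂ ^ 2) :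
    ∃ x ∈ I₁, x ∉ I₁ ^ 2 ∧ ∃ y ∈ I₂, y ∉ I₂ ^ 2 ∧ x + y = 1 := by
  have hle1 : I₁ ^ 2 ≤ I₁ := Ideal.pow_le_self two_ne_zero
  have hle2 : I₂ ^ 2 ≤ I₂ := Ideal.pow_le_self two_ne_zero
  obtain ⟨x₀, hx₀1, hx₀2⟩ : ∃ x₀ ∈ I₁, x₀ ∉ I₁ ^ 2 := by
    by_contra h; push_neg at h
    exact h1 (le_antisymm hle1 h).symm
  obtain ⟨y₀, hy₀1, hy₀2⟩ : ∃ y₀ ∈ I₂, y₀ ∉ I₂ ^ 2 := by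
    by_contra h; push_neg at h
    exact h2 (le_antisymm hle2 h).symm
  have hcop : IsCoprime I₁ I₂ := (Ideal.isCoprime_iff_sup_eq).2 hco
  have hcop2 : IsCoprime (I₁ ^ 2) (I₂ ^ 2) := hcop.pow
  have : I₁ ^ 2 ⊔ I₂ ^ 2 = ⊤ := (Ideal.isCoprime_iff_sup_eq).1 hcop2
  obtain ⟨e, he, f, hf, hef⟩ := Submodule.mem_sup.1 (this ▸ Submodule.mem_top (x := (1 : R)))
  refine ⟨f * x₀ + e * (1 - y₀), ?_, ?_, 1 - (f * x₀ + e * (1 - y₀)), ?_, ?_, by ring⟩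
  · -- membership in I₁
    exact I₁.add_mem (I₁.mul_mem_left f hx₀1) (hle1 (Ideal.mul_mem_right _ _ he))
  · -- not in I₁^2
    intro hmem
    apply hx₀2
    have h' : f * x₀ + e * (1 - y₀) - e * (1 - y₀) - (f - 1) * x₀ ∈ I₁ ^ 2 := by
      refine Submodule.sub_mem _ (Submodule.sub_mem _ hmem (Ideal.mul_mem_right _ _ he)) ?_
      have : f - 1 = -e := by linear_combination hef
      rw [this]
      exact Ideal.mul_mem_right _ _ ((I₁ ^ 2).neg_mem he)
    have : f * x₀ + e * (1 - y₀) - e * (1 - y₀) - (f - 1) * x₀ = x₀ := by ring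
    rwa [this] at h'
  · -- 1 - z ∈ I₂
    have : 1 - (f * x₀ + e * (1 - y₀)) = f * (1 - x₀) + e * y₀ + (1 - e - f) := by ring
    rw [this]
    have h0 : (1 : R) - e - f = 0 := by linear_combination -hef
    rw [h0, add_zero]
    exact I₂.add_mem (hle2 (Ideal.mul_mem_right _ _ hf)) (I₂.mul_mem_left e hy₀1)
  · -- 1 - z ∉ I₂^2
    intro hmem
    apply hy₀2
    have h' : (1 - (f * x₀ + e * (1 - y₀))) - f * (1 - x₀ - y₀) ∈ I₂ ^ 2 := by
      exact Submodule.sub_mem _ hmem (Ideal.mul_mem_right _ _ hf)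
    have heq : (1 - (f * x₀ + e * (1 - y₀))) - f * (1 - x₀ - y₀) = (1 - e - f) * (1 - y₀) + y₀ := by
      ring
    rw [heq] at h'
    have h0 : (1 : R) - e - f = 0 := by linear_combination -hef
    rwa [h0, zero_mul, zero_add] at h'
end

section
/- Let $R$ be a commutative ring and $J, K$ comaximal ideals. Suppose $a_1, \ldots, a_d \in J \cap K$, $s \in J$ and $t \in K$ satisfy $J = \langle a_1, \ldots, a_d, s \rangle$, $K = \langle a_1, \ldots, a_d, t \rangle$, $s - s^2 \in \langle a_1, \ldots, a_d \rangle$ and $t - t^2 \in \langle a_1, \ldots, a_d \rangle$. Then $J \cap K = \langle a_1, \ldots, a_d, st \rangle$ and $st - (st)^2 \in \langle a_1, \ldots, a_d \rangle$. -/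
theorem stmt7 {R : Type*} [CommRing R] (J K : Ideal R) (hco : J + K = ⊤)
    (d : ℕ) (a : Fin d → R) (ha : ∀ i, a i ∈ J ⊓ K) (s t : R)
    (hs : s ∈ J) (ht : t ∈ K)
    (hJ : J = Ideal.span (Set.range a) ⊔ Ideal.span {s})
    (hK : K = Ideal.span (Set.range a) ⊔ Ideal.span {t})
    (hs2 : s - s ^ 2 ∈ Ideal.span (Set.range a))
    (ht2 : t - t ^ 2 ∈ Ideal.span (Set.range a)) :
    J ⊓ K = Ideal.span (Set.range a) ⊔ Ideal.span {s * t} ∧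
      s * t - (s * t) ^ 2 ∈ Ideal.span (Set.range a) := by
  set A := Ideal.span (Set.range a) with hA
  have hAle : A ≤ J ⊓ K := by
    rw [hA, Ideal.span_le]
    rintro x ⟨i, rfl⟩
    exact ha i
  constructor
  · apply le_antisymm
    · rintro x ⟨hxJ, hxK⟩
      rw [hJ] at hxJ
      rw [hK] at hxK
      obtain ⟨p, hp, c, hc, rfl⟩ := Submodule.mem_sup.mp hxJ
      obtain ⟨r, rfl⟩ := Ideal.mem_span_singleton'.mp hc
      obtain ⟨q, hq, e, he, hqe⟩ := Submodule.mem_sup.mp hxK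
      obtain ⟨f, rfl⟩ := Ideal.mem_span_singleton'.mp he
      -- x = p + r*s ; x*t ∈ A ⊔ span{st}, x - x*t ∈ A
      have h1 : (p + r * s) * t ∈ A ⊔ Ideal.span {s * t} := by
        have : (p + r * s) * t = p * t + r * (s * t) := by ring
        rw [this]
        exact Submodule.add_mem _
          (Ideal.mem_sup_left (Ideal.mul_mem_right _ _ hp))
          (Ideal.mem_sup_right (Ideal.mul_mem_left _ _ (Ideal.subset_span rfl)))
      have h2 : (p + r * s) - (p + r * s) * t ∈ A := by
        rw [← hqe]
        have : (q + f * t) - (q + f * t) * t = q * (1 - t) + f * (t - t ^ 2) := by ring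
        rw [this]
        exact Submodule.add_mem _ (Ideal.mul_mem_right _ _ hq)
          (Ideal.mul_mem_left _ _ ht2)
      have : p + r * s = ((p + r * s) - (p + r * s) * t) + (p + r * s) * t := by ring
      rw [this]
      exact Submodule.add_mem _ (Ideal.mem_sup_left h2) h1
    · apply sup_le hAle
      rw [Ideal.span_le, Set.singleton_subset_iff]
      exact ⟨Ideal.mul_mem_right _ _ hs, Ideal.mul_mem_left _ _ ht⟩
  · have : s * t - (s * t) ^ 2 = t * (s - s ^ 2) + s ^ 2 * (t - t ^ 2) := by ring
    rw [this]
    exact Submodule.add_mem _ (Ideal.mul_mem_left _ _ hs2) (Ideal.mul_mem_left _ _ ht2)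
end

section
/- Let $R$ be a commutative Noetherian ring and $J, K$ comaximal ideals. Then $J \cap K = J \cdot K$, and if $J = \langle x, c_1, \ldots, c_m \rangle + J^2$ and $K = \langle y, c_1, \ldots, c_m \rangle + K^2$ with $x \in J$, $y \in K$, $x + y = 1$, and $c_i \in J \cap K$, then $J \cap K = \langle xy, c_1, \ldots, c_m \rangle + (J \cap K)^2$. -/
/-!
Since `x + y = 1`, every ideal `I` splits as `I * (x) ⊔ I * (y)`, so `J ⊓ K ≤ K * (x) ⊔ J * (y)`.
Multiplying the presentation of `J` by `y` gives `J * (y) ≤ (x y) ⊔ (c) ⊔ J ^ 2 * (y)`, and the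
error term splits once more as `J ^ 2 * (x y) ⊔ (J * (y)) ^ 2 ≤ (x y) ⊔ (J ⊓ K) ^ 2`;
symmetrically for `K * (x)`.
-/

namespace Ideal

variable {R : Type*} [CommRing R]

theorem span_singleton_sup_span_singleton_eq_top {x y : R} (hxy : x + y = 1) :
    span {x} ⊔ span {y} = ⊤ := by
  rw [← isCoprime_iff_sup_eq, isCoprime_span_singleton_iff]
  exact ⟨1, 1, by rw [one_mul, one_mul, hxy]⟩

theorem sq_mul_span_singleton_le_of_le_span_sup_sup_sq {J K : Ideal R} {x y : R} (hy : y ∈ K)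
    (hxy : span {x} ⊔ span {y} = ⊤) :
    J ^ 2 * span {y} ≤ span {x * y} ⊔ (J * K) ^ 2 := by
  have hyK : span {y} ≤ K := (span_singleton_le_iff_mem _).2 hy
  calc J ^ 2 * span {y} = J ^ 2 * span {y} * (span {x} + span {y}) := by
        rw [Submodule.add_eq_sup, hxy, mul_top]
    _ = J ^ 2 * (span {x} * span {y}) + (J * span {y}) ^ 2 := by ring
    _ ≤ span {x * y} ⊔ (J * K) ^ 2 := by
        rw [span_singleton_mul_span_singleton]
        exact sup_le_sup Ideal.mul_le_right (pow_right_mono (mul_mono_right hyK) 2)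

theorem mul_span_singleton_le_of_le_span_sup_sup_sq {J K C : Ideal R} {x y : R} (hy : y ∈ K)
    (hxy : span {x} ⊔ span {y} = ⊤) (hJ : J ≤ span {x} ⊔ C ⊔ J ^ 2) :
    J * span {y} ≤ span {x * y} ⊔ C ⊔ (J ⊓ K) ^ 2 := by
  have hsq : J ^ 2 * span {y} ≤ span {x * y} ⊔ (J ⊓ K) ^ 2 :=
    (sq_mul_span_singleton_le_of_le_span_sup_sup_sq hy hxy).trans (sup_le_sup_left (pow_right_mono mul_le_inf 2) _)
  calc J * span {y} ≤ (span {x} ⊔ C ⊔ J ^ 2) * span {y} := mul_mono_left hJ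
    _ = span {x * y} ⊔ C * span {y} ⊔ J ^ 2 * span {y} := by
        rw [sup_mul, sup_mul, span_singleton_mul_span_singleton]
    _ ≤ span {x * y} ⊔ C ⊔ (J ⊓ K) ^ 2 :=
        sup_le ((sup_le_sup_left Ideal.mul_le_left _).trans le_sup_left)
          (hsq.trans (sup_le_sup_right le_sup_left _))

end Ideal

open Ideal in
theorem stmt16_general {R : Type*} [CommRing R]
    (J K : Ideal R) (hco : J + K = ⊤)
    (x y : R) (hx : x ∈ J) (hy : y ∈ K) (hxy : x + y = 1)
    (m : ℕ) (c : Fin m → R) (hc : ∀ i, c i ∈ J ⊓ K)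
    (hJ : J = Ideal.span {x} ⊔ Ideal.span (Set.range c) ⊔ J ^ 2)
    (hK : K = Ideal.span {y} ⊔ Ideal.span (Set.range c) ⊔ K ^ 2) :
    J ⊓ K = J * K ∧
      J ⊓ K = Ideal.span {x * y} ⊔ Ideal.span (Set.range c) ⊔ (J ⊓ K) ^ 2 := by
  have hspan := span_singleton_sup_span_singleton_eq_top hxy
  refine ⟨(mul_eq_inf_of_coprime hco).symm, le_antisymm ?_ ?_⟩
  · have hKx := mul_span_singleton_le_of_le_span_sup_sup_sq hx
      (span_singleton_sup_span_singleton_eq_top ((add_comm y x).trans hxy)) hK.le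
    rw [mul_comm y x, inf_comm] at hKx
    calc J ⊓ K = (J ⊓ K) * (span {x} ⊔ span {y}) := by rw [hspan, mul_top]
      _ ≤ K * span {x} ⊔ J * span {y} := by
          rw [Ideal.mul_sup]
          exact sup_le_sup (mul_mono_left inf_le_right) (mul_mono_left inf_le_left)
      _ ≤ _ := sup_le hKx (mul_span_singleton_le_of_le_span_sup_sup_sq hy hspan hJ.le)
  · refine sup_le (sup_le ?_ ?_) (pow_le_self two_ne_zero)
    · exact (span_singleton_le_iff_mem _).2 ⟨J.mul_mem_right y hx, K.mul_mem_left x hy⟩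
    · exact span_le.2 (Set.range_subset_iff.2 hc)

theorem stmt16 {R : Type*} [CommRing R] [IsNoetherianRing R]
    (J K : Ideal R) (hco : J + K = ⊤)
    (x y : R) (hx : x ∈ J) (hy : y ∈ K) (hxy : x + y = 1)
    (m : ℕ) (c : Fin m → R) (hc : ∀ i, c i ∈ J ⊓ K)
    (hJ : J = Ideal.span {x} ⊔ Ideal.span (Set.range c) ⊔ J ^ 2)
    (hK : K = Ideal.span {y} ⊔ Ideal.span (Set.range c) ⊔ K ^ 2) :
    J ⊓ K = J * K ∧
      J ⊓ K = Ideal.span {x * y} ⊔ Ideal.span (Set.range c) ⊔ (J ⊓ K) ^ 2 :=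
  stmt16_general J K hco x y hx hy hxy m c hc hJ hK
end
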